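/- For real q > 1, with c_k = -q·Γ(k+1)Γ(q+1)/Γ(q+k+2) for k ≥ 1, the series ∑_{k=1}^{∞} c_k/k converges and equals -q/(q+1)^2. -/

import Mathlib

/-!
With `s = q + 1` and `b k = Γ(k+1) / Γ(s+k+1)`, the functional equation of `Γ` gives
`b k - b (k+1) = s Γ(k+1) / Γ(s+k+2)`, and the terms of the series are a constant multiple of this
difference, so the series telescopes to `b 0 = 1 / Γ(s+1)`. That `b n → 0` follows from Euler's
limit formula: `b n = GammaSeq s n * n ^ (-s) / Γ(s)` and `GammaSeq s n → Γ(s)`.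
-/

open Real Filter Topology Finset

theorem Antitone.hasSum_sub_succ {f : ℕ → ℝ} {l : ℝ} (hf : Antitone f)
    (hl : Tendsto f atTop (𝓝 l)) : HasSum (fun n => f n - f (n + 1)) (f 0 - l) := by
  rw [hasSum_iff_tendsto_nat_of_nonneg fun n => sub_nonneg.2 (hf n.le_succ)]
  simp_rw [sum_range_sub']
  exact tendsto_const_nhds.sub hl

namespace Real

theorem Gamma_add_nat_add_one_eq_mul_prod {s : ℝ} (hs : 0 < s) (n : ℕ) :
    Gamma (s + n + 1) = Gamma s * ∏ j ∈ range (n + 1), (s + j) := by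
  induction n with
  | zero => simp [Gamma_add_one hs.ne']; ring
  | succ n ih =>
    rw [prod_range_succ, ← mul_assoc, ← ih, Nat.cast_succ, ← add_assoc,
      Gamma_add_one (by positivity)]
    ring

theorem tendsto_Gamma_nat_add_one_div_Gamma_add_nat_add_one {s : ℝ} (hs : 0 < s) :
    Tendsto (fun n : ℕ => Gamma (n + 1) / Gamma (s + n + 1)) atTop (𝓝 0) := by
  have hlim := ((GammaSeq_tendsto_Gamma s).mul
    ((tendsto_rpow_neg_atTop hs).comp tendsto_natCast_atTop_atTop)).div_const (Gamma s)
  rw [mul_zero, zero_div] at hlim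
  refine hlim.congr' ((eventually_ne_atTop 0).mono fun n hn => ?_)
  have hn' : (0 : ℝ) < n := by positivity
  simp only [Function.comp_apply, GammaSeq, Gamma_nat_eq_factorial,
    Gamma_add_nat_add_one_eq_mul_prod hs, rpow_neg hn'.le]
  have := (Gamma_pos_of_pos hs).ne'
  have := (rpow_pos_of_pos hn' s).ne'
  field_simp

theorem Gamma_div_Gamma_sub_succ {s : ℝ} {k : ℕ} (h : 0 < s + k + 1) :
    Gamma (k + 1) / Gamma (s + k + 1) - Gamma ((k + 1 : ℕ) + 1) / Gamma (s + (k + 1 : ℕ) + 1) =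
      s * Gamma (k + 1) / Gamma (s + k + 2) := by
  have hG := (Gamma_pos_of_pos h).ne'
  push_cast
  rw [Gamma_add_one (by positivity : (k : ℝ) + 1 ≠ 0),
    show s + (k + 1) + 1 = s + k + 1 + 1 by ring, show s + k + 2 = s + k + 1 + 1 by ring,
    Gamma_add_one h.ne']
  field_simp
  ring

theorem hasSum_Gamma_nat_add_one_div_Gamma {s : ℝ} (hs : 0 < s) :
    HasSum (fun k : ℕ => Gamma (k + 1) / Gamma (s + k + 2)) (1 / (s * Gamma (s + 1))) := by
  set f : ℕ → ℝ := fun k => Gamma (k + 1) / Gamma (s + k + 1)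
  have hdiff (k : ℕ) : f k - f (k + 1) = s * (Gamma (k + 1) / Gamma (s + k + 2)) := by
    rw [← mul_div_assoc]; exact Gamma_div_Gamma_sub_succ (by positivity)
  have hanti : Antitone f := antitone_nat_of_succ_le fun k => by
    have := Gamma_pos_of_pos (by positivity : (0 : ℝ) < k + 1)
    have := Gamma_pos_of_pos (by positivity : 0 < s + k + 2)
    exact sub_nonneg.1 (hdiff k ▸ by positivity)
  have hf0 : (f 0 - 0) / s = 1 / (s * Gamma (s + 1)) := by simp [f, div_eq_inv_mul, mul_comm]
  rw [← hf0]
  refine ((hanti.hasSum_sub_succ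
    (tendsto_Gamma_nat_add_one_div_Gamma_add_nat_add_one hs)).div_const s).congr_fun fun k => ?_
  rw [hdiff, mul_div_cancel_left₀ _ hs.ne']

end Real

theorem ck_over_k_sum (q : ℝ) (hq : 1 < q) :
    HasSum
      (fun k : ℕ =>
        (-q * Real.Gamma ((k : ℝ) + 2) * Real.Gamma (q + 1) / Real.Gamma (q + (k : ℝ) + 3))
          / ((k : ℝ) + 1))
      (-q / (q + 1) ^ 2) := by
  have hq1 : 0 < q + 1 := by linarith
  have hΓ := (Gamma_pos_of_pos hq1).ne'
  have hterm (k : ℕ) : (-q * Gamma ((k : ℝ) + 2) * Gamma (q + 1) / Gamma (q + k + 3)) / (k + 1) =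
      -q * Gamma (q + 1) * (Gamma (k + 1) / Gamma (q + 1 + k + 2)) := by
    rw [show (k : ℝ) + 2 = k + 1 + 1 by ring, Gamma_add_one (by positivity),
      show q + 1 + k + 2 = q + k + 3 by ring]
    field_simp
  have hvalue : -q * Gamma (q + 1) * (1 / ((q + 1) * Gamma (q + 1 + 1))) = -q / (q + 1) ^ 2 := by
    rw [Gamma_add_one hq1.ne']
    field_simp
  rw [← hvalue]
  exact ((hasSum_Gamma_nat_add_one_div_Gamma hq1).mul_left _).congr_fun hterm
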